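/- arXiv:2005.13189 — 4 statements merged into one kernel-verified Lean document; each statement's English description precedes it below -/
import Mathlib

section
/- Let $n \geq 1$ and $d \geq 1$. For $i = 1, \dots, n$ let $f_i : \mathbb{R}^d \to \mathbb{R}$ be convex and differentiable with $\|\nabla f_i(x)\| \leq D'$ for all $x \in \mathbb{R}^d$, let $f = \frac{1}{n}\sum_{i=1}^n f_i$, let $x^* \in \mathbb{R}^d$ and $f^* = f(x^*)$. Let $\alpha_k \geq 0$ be a sequence of stepsizes, let $z_i^k \in \mathbb{R}^d$ for $i = 1,\dots,n$ and $k \geq 0$, and let $\bar z^k \in \mathbb{R}^d$ satisfy the averaged dynamics $\bar z^{k+1} = \bar z^k - \frac{\alpha_k}{n}\sum_{i=1}^n \nabla f_i(z_i^k)$ for all $k$. Then for every $T \geq 0$: $2\sum_{k=0}^T \alpha_k\,(f(\bar z^k) - f^*) \leq \|\bar z^0 - x^*\|^2 + D'^2 \sum_{k=0}^T \alpha_k^2 + \frac{4D'}{n}\sum_{k=0}^T \alpha_k \sum_{i=1}^n \|z_i^k - \bar z^k\|$. -/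
/-!
Each agent's gradient at its own iterate `z k i` is, up to an error `2 D' ‖z k i - zbar k‖`,
a subgradient of `f i` at the average `zbar k`: first-order convexity is applied at `z k i` and at
`zbar k`, and the two gradients are compared through Cauchy–Schwarz and the bound `D'`.
The averaged dynamics is therefore an inexact subgradient step for `F`, so expanding
`‖zbar (k + 1) - xstar‖ ^ 2` gives a one-step descent inequality, which telescopes over `k`.
-/

open Finset
open scoped InnerProductSpace

theorem ConvexOn.add_le_of_hasFDerivAt {E : Type*} [NormedAddCommGroup E] [NormedSpace ℝ E]
    {s : Set E} {f : E → ℝ} {f' : E →L[ℝ] ℝ} {x y : E} (hf : ConvexOn ℝ s f) (hx : x ∈ s)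
    (hy : y ∈ s) (hf' : HasFDerivAt f f' x) :
    f x + f' (y - x) ≤ f y := by
  let ℓ : ℝ →ᵃ[ℝ] E := AffineMap.lineMap x y
  have hℓ : HasDerivAt ℓ (y - x) 0 := AffineMap.hasDerivAt_lineMap
  have hderiv : HasDerivAt (f ∘ ℓ) (f' (y - x)) 0 :=
    (by simpa [ℓ] using hf' : HasFDerivAt f f' (ℓ 0)).comp_hasDerivAt 0 hℓ
  have hslope := (hf.comp_affineMap ℓ).le_slope_of_hasDerivAt (x := 0) (y := 1) (by simpa [ℓ] using hx)
    (by simpa [ℓ] using hy) one_pos hderiv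
  simp only [slope_def_field, Function.comp_apply, AffineMap.lineMap_apply_one,
    AffineMap.lineMap_apply_zero, sub_zero, div_one, ℓ] at hslope
  linarith

theorem sum_range_le_of_le_sub_succ {a b e : ℕ → ℝ} (h : ∀ k, a k ≤ e k - e (k + 1) + b k)
    (T : ℕ) : ∑ k ∈ range T, a k ≤ e 0 - e T + ∑ k ∈ range T, b k := by
  rw [← sum_range_sub' e T, ← sum_add_distrib]
  exact sum_le_sum fun k _ ↦ h k

section InnerProductSpace

variable {E : Type*} [NormedAddCommGroup E] [InnerProductSpace ℝ E]

theorem ConvexOn.add_inner_gradient_le [CompleteSpace E] {s : Set E} {f : E → ℝ} {x y : E}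
    (hf : ConvexOn ℝ s f) (hx : x ∈ s) (hy : y ∈ s) (hdiff : DifferentiableAt ℝ f x) :
    f x + ⟪gradient f x, y - x⟫_ℝ ≤ f y := by
  simpa using hf.add_le_of_hasFDerivAt hx hy hdiff.hasGradientAt.hasFDerivAt

theorem ConvexOn.sub_le_inner_gradient_add [CompleteSpace E] {f : E → ℝ} {D : ℝ}
    (hf : ConvexOn ℝ Set.univ f) (hdiff : Differentiable ℝ f) (hD : ∀ w, ‖gradient f w‖ ≤ D)
    (x y z : E) :
    f y - f x ≤ ⟪y - x, gradient f z⟫_ℝ + 2 * D * ‖z - y‖ := by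
  have hzx := hf.add_inner_gradient_le (Set.mem_univ z) (Set.mem_univ x) (hdiff z)
  have hyz := hf.add_inner_gradient_le (Set.mem_univ y) (Set.mem_univ z) (hdiff y)
  have hsplit : ⟪gradient f z, x - z⟫_ℝ = -⟪y - x, gradient f z⟫_ℝ - ⟪gradient f z, z - y⟫_ℝ := by
    rw [show x - z = -(y - x) - (z - y) by abel, inner_sub_right, inner_neg_right,
      real_inner_comm (y - x)]
  have hCS : ∀ w, |⟪gradient f w, z - y⟫_ℝ| ≤ D * ‖z - y‖ := fun w ↦
    (abs_real_inner_le_norm _ _).trans (mul_le_mul_of_nonneg_right (hD w) (norm_nonneg _))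
  linarith [hCS y, hCS z, neg_abs_le ⟪gradient f y, z - y⟫_ℝ, le_abs_self ⟪gradient f z, z - y⟫_ℝ]

theorem norm_sub_smul_sub_sq_le {D t : ℝ} {g : E} (hg : ‖g‖ ≤ D) (x y : E) :
    ‖y - t • g - x‖ ^ 2 ≤ ‖y - x‖ ^ 2 - 2 * t * ⟪y - x, g⟫_ℝ + t ^ 2 * D ^ 2 := by
  have hexpand : ‖y - t • g - x‖ ^ 2 = ‖y - x‖ ^ 2 - 2 * t * ⟪y - x, g⟫_ℝ + t ^ 2 * ‖g‖ ^ 2 := by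
    rw [sub_right_comm, norm_sub_sq_real, real_inner_smul_right, norm_smul, mul_pow,
      Real.norm_eq_abs, sq_abs]
    ring
  rw [hexpand]
  gcongr

theorem norm_inv_card_smul_sum_le {ι : Type*} {s : Finset ι} (hs : s.Nonempty) {v : ι → E}
    {D : ℝ} (hv : ∀ i ∈ s, ‖v i‖ ≤ D) : ‖(#s : ℝ)⁻¹ • ∑ i ∈ s, v i‖ ≤ D := by
  rw [norm_smul, norm_inv, RCLike.norm_natCast, inv_mul_le_iff₀ (by positivity)]
  simpa using norm_sum_le_of_le s hv

theorem sum_sub_le_inner_sum_gradient_add [CompleteSpace E] {ι : Type*} (s : Finset ι)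
    {f : ι → E → ℝ} {D : ℝ} (hf : ∀ i, ConvexOn ℝ Set.univ (f i))
    (hdiff : ∀ i, Differentiable ℝ (f i)) (hD : ∀ i w, ‖gradient (f i) w‖ ≤ D)
    (x y : E) (z : ι → E) :
    ∑ i ∈ s, (f i y - f i x) ≤
      ⟪y - x, ∑ i ∈ s, gradient (f i) (z i)⟫_ℝ + 2 * D * ∑ i ∈ s, ‖z i - y‖ := by
  rw [inner_sum, mul_sum, ← sum_add_distrib]
  exact sum_le_sum fun i _ ↦ (hf i).sub_le_inner_gradient_add (hdiff i) (hD i) x y (z i)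

end InnerProductSpace

theorem stmt_0_general (n d : ℕ) (hn : 1 ≤ n)
    (f : Fin n → EuclideanSpace ℝ (Fin d) → ℝ)
    (hconv : ∀ i, ConvexOn ℝ Set.univ (f i))
    (hdiff : ∀ i, Differentiable ℝ (f i))
    (D' : ℝ) (hD : ∀ i x, ‖gradient (f i) x‖ ≤ D')
    (F : EuclideanSpace ℝ (Fin d) → ℝ)
    (hF : ∀ x, F x = (1 / (n : ℝ)) * ∑ i, f i x)
    (xstar : EuclideanSpace ℝ (Fin d))
    (α : ℕ → ℝ) (hα : ∀ k, 0 ≤ α k)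
    (z : ℕ → Fin n → EuclideanSpace ℝ (Fin d))
    (zbar : ℕ → EuclideanSpace ℝ (Fin d))
    (hdyn : ∀ k, zbar (k + 1) = zbar k - (α k / n) • ∑ i, gradient (f i) (z k i))
    (T : ℕ) :
    2 * ∑ k ∈ range (T + 1), α k * (F (zbar k) - F xstar) ≤
      ‖zbar 0 - xstar‖ ^ 2 + D' ^ 2 * ∑ k ∈ range (T + 1), α k ^ 2 +
        (4 * D' / n) * ∑ k ∈ range (T + 1), α k * ∑ i, ‖z k i - zbar k‖ := by
  have hstep : ∀ k, 2 * (α k * (F (zbar k) - F xstar)) ≤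
      ‖zbar k - xstar‖ ^ 2 - ‖zbar (k + 1) - xstar‖ ^ 2 +
        (D' ^ 2 * α k ^ 2 + 4 * D' / n * (α k * ∑ i, ‖z k i - zbar k‖)) := by
    intro k
    set g := (n : ℝ)⁻¹ • ∑ i, gradient (f i) (z k i)
    have hg : ‖g‖ ≤ D' := by
      simpa [g] using
        norm_inv_card_smul_sum_le (univ_nonempty_iff.2 ⟨⟨0, hn⟩⟩) fun i _ ↦ hD i (z k i)
    have hgap : F (zbar k) - F xstar ≤
        ⟪zbar k - xstar, g⟫_ℝ + 2 * D' / n * ∑ i, ‖z k i - zbar k‖ := by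
      have hsum := sum_sub_le_inner_sum_gradient_add univ hconv hdiff hD xstar (zbar k) (z k)
      rw [sum_sub_distrib] at hsum
      rw [hF, hF, real_inner_smul_right]
      field_simp
      linarith
    have hnext : zbar (k + 1) = zbar k - α k • g := by
      rw [hdyn, smul_smul, div_eq_mul_inv]
    have hdescent := norm_sub_smul_sub_sq_le (t := α k) hg xstar (zbar k)
    rw [← hnext] at hdescent
    linear_combination 2 * mul_le_mul_of_nonneg_left hgap (hα k) + hdescent
  calc 2 * ∑ k ∈ range (T + 1), α k * (F (zbar k) - F xstar)
      ≤ ‖zbar 0 - xstar‖ ^ 2 - ‖zbar (T + 1) - xstar‖ ^ 2 + ∑ k ∈ range (T + 1),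
          (D' ^ 2 * α k ^ 2 + 4 * D' / n * (α k * ∑ i, ‖z k i - zbar k‖)) := by
        rw [mul_sum]
        exact sum_range_le_of_le_sub_succ hstep (T + 1)
    _ ≤ _ := by
        rw [sum_add_distrib, ← mul_sum, ← mul_sum]
        linarith [sq_nonneg ‖zbar (T + 1) - xstar‖]

/-- Core inequality of Theorem 1: the averaged dynamics of the decentralized
algorithm over `T+1` steps. -/
theorem stmt_0 (n d : ℕ) (hn : 1 ≤ n) (hd : 1 ≤ d)
    (f : Fin n → EuclideanSpace ℝ (Fin d) → ℝ)
    (hconv : ∀ i, ConvexOn ℝ Set.univ (f i))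
    (hdiff : ∀ i, Differentiable ℝ (f i))
    (D' : ℝ) (hD : ∀ i x, ‖gradient (f i) x‖ ≤ D')
    (F : EuclideanSpace ℝ (Fin d) → ℝ)
    (hF : ∀ x, F x = (1 / (n : ℝ)) * ∑ i, f i x)
    (xstar : EuclideanSpace ℝ (Fin d))
    (α : ℕ → ℝ) (hα : ∀ k, 0 ≤ α k)
    (z : ℕ → Fin n → EuclideanSpace ℝ (Fin d))
    (zbar : ℕ → EuclideanSpace ℝ (Fin d))
    (hdyn : ∀ k, zbar (k + 1) = zbar k - (α k / n) • ∑ i, gradient (f i) (z k i))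
    (T : ℕ) :
    2 * ∑ k ∈ range (T + 1), α k * (F (zbar k) - F xstar) ≤
      ‖zbar 0 - xstar‖ ^ 2 + D' ^ 2 * ∑ k ∈ range (T + 1), α k ^ 2 +
        (4 * D' / n) * ∑ k ∈ range (T + 1), α k * ∑ i, ‖z k i - zbar k‖ :=
  stmt_0_general n d hn f hconv hdiff D' hD F hF xstar α hα z zbar hdyn T
end

section
/- Let $n \geq 1$, let $u = (\mathbf{1}_n; \mathbf{0}_n) \in \mathbb{R}^{2n}$ be the vector whose first $n$ entries are $1$ and last $n$ entries are $0$, and let $J = \frac{1}{n} u \mathbf{1}_{2n}^T \in \mathbb{R}^{2n \times 2n}$. Let $M_1, \dots, M_T \in \mathbb{R}^{2n \times 2n}$ be matrices such that for every $k$: (i) every column of $M_k$ sums to $1$, (ii) $M_k u = u$, and (iii) $\|M_k - J\|_2 \leq \sigma$ in operator $2$-norm. Then the $\infty$-norm (maximum absolute row sum) satisfies $\|M_T M_{T-1} \cdots M_1 - J\|_\infty \leq \sqrt{2n}\, \sigma^T$. -/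
/-! Because every column of `M k` sums to `1` and `M k` fixes `u`, the rank-one idempotent `J`
absorbs each `M k` on both sides, so `M_T ⋯ M_1 - J = (M_T - J) ⋯ (M_1 - J)` and the spectral
norm of the deviation is at most `σ ^ T`. Row `i` of a matrix `A` is `Aᴴ eᵢ`, so its `ℓ²` norm is
at most the spectral norm, and by Cauchy–Schwarz its `ℓ¹` norm is at most `√(2n)` times that. -/

open Finset Matrix WithLp
open scoped Matrix.Norms.L2Operator

theorem EuclideanSpace.sum_norm_le_sqrt_card_mul_norm {𝕜 ι : Type*} [RCLike 𝕜] [Fintype ι]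
    (x : EuclideanSpace 𝕜 ι) : ∑ i, ‖x i‖ ≤ √(Fintype.card ι) * ‖x‖ := by
  have := Real.sum_mul_le_sqrt_mul_sqrt univ (fun i => ‖x i‖) (fun _ => 1)
  simpa [EuclideanSpace.norm_eq, mul_comm] using this

theorem Matrix.norm_toLp_row_le_l2_opNorm {𝕜 m n : Type*} [RCLike 𝕜] [Fintype m] [Fintype n]
    [DecidableEq m] [DecidableEq n] (A : Matrix m n 𝕜) (i : m) : ‖toLp 2 (A i)‖ ≤ ‖A‖ := by
  have h := l2_opNorm_mulVec Aᴴ (EuclideanSpace.single i 1)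
  rw [l2_opNorm_conjTranspose] at h
  convert h using 1
  · simp [EuclideanSpace.norm_eq]
  · simp

theorem Matrix.sum_norm_row_le_sqrt_card_mul_l2_opNorm {𝕜 m n : Type*} [RCLike 𝕜] [Fintype m]
    [Fintype n] [DecidableEq m] [DecidableEq n] (A : Matrix m n 𝕜) (i : m) :
    ∑ j, ‖A i j‖ ≤ √(Fintype.card n) * ‖A‖ :=
  (EuclideanSpace.sum_norm_le_sqrt_card_mul_norm (toLp 2 (A i))).trans <| by
    gcongr; exact norm_toLp_row_le_l2_opNorm A i

theorem Matrix.one_vecMul_eq_one_iff {ι R : Type*} [Fintype ι] [NonAssocSemiring R]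
    {A : Matrix ι ι R} : (1 : ι → R) ᵥ* A = 1 ↔ ∀ j, ∑ i, A i j = 1 := by
  simp [funext_iff, vecMul, dotProduct]

theorem List.norm_prod_le_pow_length {R : Type*} [SeminormedRing R] {L : List R} (hL : L ≠ [])
    {σ : ℝ} (h : ∀ a ∈ L, ‖a‖ ≤ σ) : ‖L.prod‖ ≤ σ ^ L.length := by
  refine (List.norm_prod_le' hL).trans ?_
  simpa using List.prod_map_le_prod_map₀ norm (fun _ => σ) (fun _ _ => norm_nonneg _) h

theorem mul_list_prod_eq_self {M : Type*} [Monoid M] {e : M} {L : List M}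
    (h : ∀ a ∈ L, e * a = e) : e * L.prod = e := by
  induction L with
  | nil => simp
  | cons a L ih =>
    rw [List.prod_cons, ← mul_assoc, h a (by simp), ih fun b hb => h b (by simp [hb])]

theorem List.prod_sub_eq_prod_map_sub {R : Type*} [Ring R] {J : R} (hJJ : J * J = J)
    {L : List R} (hL : L ≠ []) (hleft : ∀ a ∈ L, J * a = J) (hright : ∀ a ∈ L, a * J = J) :
    L.prod - J = (L.map (· - J)).prod := by
  induction L with
  | nil => exact absurd rfl hL
  | cons a L ih =>
    rcases eq_or_ne L [] with rfl | hL'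
    · simp
    have hleft' : ∀ b ∈ L, J * b = J := fun b hb => hleft b (by simp [hb])
    rw [List.map_cons, List.prod_cons, List.prod_cons,
      ← ih hL' hleft' fun b hb => hright b (by simp [hb]), mul_sub, sub_mul, sub_mul,
      hright a (by simp), mul_list_prod_eq_self hleft', hJJ]
    abel

theorem Fin.sum_ite_val_lt {R : Type*} [AddCommMonoidWithOne R] {m n : ℕ} (h : n ≤ m) :
    ∑ i : Fin m, (if (i : ℕ) < n then (1 : R) else 0) = n := by
  have : (range m).filter (· < n) = range n := by ext; simp; omega
  simp [Fin.sum_univ_eq_sum_range (fun i => if i < n then (1 : R) else 0), sum_boole, this]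

/-- Lemma 3(b) (Lemma 0(b) of the appendix): under the hypotheses of Lemma 12,
the ∞-norm (maximum absolute row sum) of the deviation of the product from the
consensus projector `J` is at most `√(2n) σ^T`; we state the bound for every
row, which is equivalent to the bound on the maximum. -/
theorem stmt_4 (n : ℕ) (hn : 1 ≤ n) (T : ℕ) (hT : 1 ≤ T) (σ : ℝ)
    (u : Fin (2 * n) → ℝ) (hu : ∀ i, u i = if (i : ℕ) < n then 1 else 0)
    (J : Matrix (Fin (2 * n)) (Fin (2 * n)) ℝ)
    (hJ : ∀ i j, J i j = (1 / n : ℝ) * u i)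
    (M : Fin T → Matrix (Fin (2 * n)) (Fin (2 * n)) ℝ)
    (hcol : ∀ k j, ∑ i, M k i j = 1)
    (hfix : ∀ k, (M k).mulVec u = u)
    (hnorm : ∀ k, ‖Matrix.toEuclideanCLM (𝕜 := ℝ) (M k - J)‖ ≤ σ) :
    ∀ i, ∑ j, |((List.ofFn M).reverse.prod - J) i j| ≤ Real.sqrt (2 * n) * σ ^ T := by
  have hsum_u : ∑ i, u i = n := by simp only [hu]; exact Fin.sum_ite_val_lt (by omega)
  have hJ_eq : J = vecMulVec ((1 / n : ℝ) • u) 1 := by ext i j; simp [hJ, vecMulVec_apply]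
  have hJ_col : ∀ j, ∑ i, J i j = 1 := fun j => by
    have hn' : (n : ℝ) ≠ 0 := Nat.cast_ne_zero.2 (by omega)
    simp [hJ, ← mul_sum, hsum_u, hn']
  have hJ_left : ∀ A, (∀ j, ∑ i, A i j = 1) → J * A = J := fun A hA => by
    nth_rw 1 [hJ_eq]
    rw [vecMulVec_mul, one_vecMul_eq_one_iff.2 hA, ← hJ_eq]
  have hMJ : ∀ k, M k * J = J := fun k => by rw [hJ_eq, mul_vecMulVec, mulVec_smul, hfix]
  set L := (List.ofFn M).reverse
  have hL : L ≠ [] := by simp [L]; omega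
  have hL_forall : ∀ P : Matrix (Fin (2 * n)) (Fin (2 * n)) ℝ → Prop, (∀ k, P (M k)) →
      ∀ A ∈ L, P A := by
    simp [L]
  have hdev : ‖L.prod - J‖ ≤ σ ^ T := by
    rw [List.prod_sub_eq_prod_map_sub (hJ_left J hJ_col) hL
      (hL_forall _ fun k => hJ_left _ (hcol k)) (hL_forall _ hMJ)]
    have h := List.norm_prod_le_pow_length (List.map_eq_nil_iff.not.2 hL)
      (List.forall_mem_map.2 (hL_forall (fun A => ‖A - J‖ ≤ σ) hnorm))
    simpa [L] using h
  intro i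
  have hrow := sum_norm_row_le_sqrt_card_mul_l2_opNorm (L.prod - J) i
  rw [Fintype.card_fin, Nat.cast_mul, Nat.cast_ofNat] at hrow
  simp only [Real.norm_eq_abs] at hrow
  exact hrow.trans (by gcongr)
end

section
/- Let $n \geq 1$, $N = 2n$, $0 < \sigma < 1$, $\Gamma > 0$, $D \geq 0$. Let $J \in \mathbb{R}^{N \times N}$ be the matrix with $J_{ij} = 1/n$ for $1 \leq i \leq n$ and $J_{ij} = 0$ for $n+1 \leq i \leq N$ (all $j$). For integers $0 \leq r \leq s$ let $P(s{:}r) \in \mathbb{R}^{N \times N}$ be matrices such that every column of $P(s{:}r)$ sums to $1$ and $|[P(s{:}r)]_{ij} - J_{ij}| \leq \Gamma \sigma^{s-r+1}$ for all $i,j$. Let $\alpha_r \geq 0$, let $g^r \in \mathbb{R}^N$ satisfy $|g^r_j| \leq D$ for all $j$ and $g^r_j = 0$ for $j > n$, let $z^0 \in \mathbb{R}^N$, and for $k \geq 1$ define $z^k = P(k{-}1{:}0)\, z^0 - \sum_{r=1}^{k-1} \alpha_{r-1} P(k{-}1{:}r)\, g^{r-1} - \alpha_{k-1} g^{k-1}$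 and $\bar z^k = \frac{1}{n}\sum_{j=1}^{N} z^k_j$. Then for every $k \geq 1$ and every $1 \leq i \leq n$: $|z^k_i - \bar z^k| \leq \Gamma \sigma^k \sum_{j=1}^{N} |z^0_j| + n \Gamma D \sum_{r=1}^{k-1} \sigma^{k-r} \alpha_{r-1} + 2 D \alpha_{k-1}$. -/
open Finset
open scoped Matrix

/-!
Write `gap v := v i - (1/n) ∑ⱼ vⱼ`, a linear functional, so that `z^k_i - z̄^k = gap z^k` splits
along the closed form of `z^k`. Because the columns of `P(s:r)` sum to one, `gap (P(s:r) v)` is the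
`i`-th entry of `(P(s:r) - J) v` (row `i` of `J` is constant `1/n`), hence at most
`Γ σ^(s-r+1) ∑ⱼ |vⱼ|`. The gradients are supported on `n` coordinates, so `∑ⱼ |g^r_j| ≤ n D`; the
last gradient, not multiplied by any `P`, is bounded crudely by `|g_i| + (1/n) ∑ⱼ |g_j| ≤ 2 D`.
-/

section AverageGap

variable {ι : Type*} [Fintype ι]

def averageGap (c : ℝ) (i : ι) : (ι → ℝ) →ₗ[ℝ] ℝ :=
  LinearMap.proj i - c • ∑ j, LinearMap.proj j

@[simp]
lemma averageGap_apply (c : ℝ) (i : ι) (v : ι → ℝ) :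
    averageGap c i v = v i - c * ∑ j, v j := by
  simp [averageGap]

lemma sum_mulVec_of_sum_col_eq_one {A : Matrix ι ι ℝ} (hA : ∀ j, ∑ i, A i j = 1)
    (v : ι → ℝ) : ∑ i, (A *ᵥ v) i = ∑ i, v i := by
  simp only [Matrix.mulVec, dotProduct]
  rw [sum_comm]
  simp [← sum_mul, hA]

lemma abs_averageGap_mulVec_le {A : Matrix ι ι ℝ} (hA : ∀ j, ∑ i, A i j = 1)
    {c ε : ℝ} {i : ι} (hrow : ∀ j, |A i j - c| ≤ ε) (v : ι → ℝ) :
    |averageGap c i (A *ᵥ v)| ≤ ε * ∑ j, |v j| := by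
  have hdiff : averageGap c i (A *ᵥ v) = ∑ j, (A i j - c) * v j := by
    rw [averageGap_apply, sum_mulVec_of_sum_col_eq_one hA]
    simp only [Matrix.mulVec, dotProduct, sub_mul, sum_sub_distrib, mul_sum]
  calc |averageGap c i (A *ᵥ v)| ≤ ∑ j, |A i j - c| * |v j| := by
        rw [hdiff]
        exact (abs_sum_le_sum_abs _ _).trans_eq (by simp only [abs_mul])
    _ ≤ ∑ j, ε * |v j| := by gcongr with j; exact hrow j
    _ = ε * ∑ j, |v j| := by rw [mul_sum]

lemma abs_averageGap_le {c D M : ℝ} (hc : 0 ≤ c) {i : ι} {v : ι → ℝ} (hv : |v i| ≤ D)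
    (hM : ∑ j, |v j| ≤ M) : |averageGap c i v| ≤ D + c * M := by
  calc |averageGap c i v| ≤ |v i| + c * |∑ j, v j| := by
        simpa [abs_mul, abs_of_nonneg hc] using abs_sub (v i) (c * ∑ j, v j)
    _ ≤ D + c * M := by gcongr; exact (abs_sum_le_sum_abs _ _).trans hM

lemma sum_abs_le_card_mul {s : Finset ι} {v : ι → ℝ} {D : ℝ} (hv : ∀ j, |v j| ≤ D)
    (hs : ∀ j ∉ s, v j = 0) : ∑ j, |v j| ≤ #s * D := by
  rw [← sum_subset (subset_univ s) (fun j _ hj => by simp [hs j hj])]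
  simpa using sum_le_card_nsmul s _ D (fun j _ => hv j)

end AverageGap

lemma sum_abs_le_mul_of_eq_zero_of_le {m n : ℕ} (hnm : n ≤ m) {v : Fin m → ℝ} {D : ℝ}
    (hv : ∀ j, |v j| ≤ D) (hv0 : ∀ j : Fin m, n ≤ (j : ℕ) → v j = 0) :
    ∑ j, |v j| ≤ n * D := by
  have hcard : #{j : Fin m | (j : ℕ) < n} = n := by
    rw [Fin.card_filter_val_lt]; omega
  simpa only [hcard] using
    sum_abs_le_card_mul (s := {j : Fin m | (j : ℕ) < n}) hv fun j hj => hv0 j (by simpa using hj)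

lemma abs_sub_sum_sub_le {κ : Type*} (s : Finset κ) (a c : ℝ) (b : κ → ℝ) :
    |a - ∑ r ∈ s, b r - c| ≤ |a| + ∑ r ∈ s, |b r| + |c| := by
  calc |a - ∑ r ∈ s, b r - c| ≤ |a| + |∑ r ∈ s, b r| + |c| :=
        (abs_sub _ _).trans (add_le_add_left (abs_sub _ _) _)
    _ ≤ |a| + ∑ r ∈ s, |b r| + |c| := by gcongr; exact abs_sum_le_sum_abs _ _

theorem stmt_14_general (n : ℕ) (hn : 1 ≤ n) (σ Γ D : ℝ)
    (hσ0 : 0 < σ) (hΓ : 0 < Γ)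
    (J : Matrix (Fin (2 * n)) (Fin (2 * n)) ℝ)
    (hJ : ∀ i j, J i j = if (i : ℕ) < n then (1 / n : ℝ) else 0)
    (P : ℕ → ℕ → Matrix (Fin (2 * n)) (Fin (2 * n)) ℝ)
    (hPcol : ∀ r s, r ≤ s → ∀ j, ∑ i, P s r i j = 1)
    (hPdev : ∀ r s, r ≤ s → ∀ i j, |P s r i j - J i j| ≤ Γ * σ ^ (s - r + 1))
    (α : ℕ → ℝ) (hα : ∀ r, 0 ≤ α r)
    (g : ℕ → Fin (2 * n) → ℝ)
    (hgD : ∀ r j, |g r j| ≤ D)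
    (hg0 : ∀ r (j : Fin (2 * n)), n ≤ (j : ℕ) → g r j = 0)
    (z0 : Fin (2 * n) → ℝ)
    (z : ℕ → Fin (2 * n) → ℝ)
    (hz : ∀ k, 1 ≤ k → z k = (P (k - 1) 0).mulVec z0
        - ∑ r ∈ Icc 1 (k - 1), α (r - 1) • (P (k - 1) r).mulVec (g (r - 1))
        - α (k - 1) • g (k - 1))
    (zbar : ℕ → ℝ) (hzbar : ∀ k, zbar k = (1 / n : ℝ) * ∑ j, z k j) :
    ∀ k, 1 ≤ k → ∀ i : Fin (2 * n), (i : ℕ) < n →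
      |z k i - zbar k| ≤ Γ * σ ^ k * ∑ j, |z0 j|
        + n * Γ * D * ∑ r ∈ Icc 1 (k - 1), σ ^ (k - r) * α (r - 1)
        + 2 * D * α (k - 1) := by
  intro k hk i hi
  set gap := averageGap (1 / n : ℝ) i
  have hrow : ∀ r ≤ k - 1, ∀ v, |gap (P (k - 1) r *ᵥ v)| ≤ Γ * σ ^ (k - r) * ∑ j, |v j| :=
    fun r hr => abs_averageGap_mulVec_le (hPcol r _ hr) fun j => by
      simpa [hJ, hi, show k - 1 - r + 1 = k - r by omega] using hPdev r _ hr i j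
  have hgsum : ∀ r, ∑ j, |g r j| ≤ n * D := fun r =>
    sum_abs_le_mul_of_eq_zero_of_le (by omega) (hgD r) (hg0 r)
  have hsplit : z k i - zbar k = gap (P (k - 1) 0 *ᵥ z0)
      - ∑ r ∈ Icc 1 (k - 1), α (r - 1) * gap (P (k - 1) r *ᵥ g (r - 1))
      - α (k - 1) * gap (g (k - 1)) := by
    rw [hzbar, ← averageGap_apply, hz k hk]
    simp only [map_sub, map_sum, map_smul, smul_eq_mul, gap]
  rw [hsplit]
  refine (abs_sub_sum_sub_le _ _ _ _).trans (add_le_add (add_le_add ?_ ?_) ?_)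
  · simpa using hrow 0 (Nat.zero_le _) z0
  · rw [mul_sum]
    gcongr with r hr
    rw [abs_mul, abs_of_nonneg (hα _)]
    calc α (r - 1) * |gap (P (k - 1) r *ᵥ g (r - 1))|
        ≤ α (r - 1) * (Γ * σ ^ (k - r) * ∑ j, |g (r - 1) j|) :=
          mul_le_mul_of_nonneg_left (hrow r (mem_Icc.mp hr).2 _) (hα _)
      _ ≤ α (r - 1) * (Γ * σ ^ (k - r) * (n * D)) :=
          mul_le_mul_of_nonneg_left (mul_le_mul_of_nonneg_left (hgsum _) (by positivity)) (hα _)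
      _ = n * Γ * D * (σ ^ (k - r) * α (r - 1)) := by ring
  · rw [abs_mul, abs_of_nonneg (hα _)]
    calc α (k - 1) * |gap (g (k - 1))| ≤ α (k - 1) * (D + 1 / n * (n * D)) :=
          mul_le_mul_of_nonneg_left
            (abs_averageGap_le (by positivity) (hgD _ i) (hgsum _)) (hα _)
      _ = 2 * D * α (k - 1) := by field_simp; ring

/-- Lemma 3(a) of the paper in abstract form: the per-coordinate disagreement
bound `|z^k_i - z̄^k| ≤ Γ σ^k ∑_j |z^0_j| + n Γ D ∑_{r=1}^{k-1} σ^{k-r} α_{r-1}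
+ 2 D α_{k-1}` for the first `n` coordinates, where `z^k` is the closed-form
solution of the sparsified decentralized update driven by products `P(s:r)` of
perturbed mixing matrices that deviate entrywise from the consensus projector
`J` geometrically and have columns summing to one. -/
theorem stmt_14 (n : ℕ) (hn : 1 ≤ n) (σ Γ D : ℝ)
    (hσ0 : 0 < σ) (hσ1 : σ < 1) (hΓ : 0 < Γ) (hD : 0 ≤ D)
    (J : Matrix (Fin (2 * n)) (Fin (2 * n)) ℝ)
    (hJ : ∀ i j, J i j = if (i : ℕ) < n then (1 / n : ℝ) else 0)
    (P : ℕ → ℕ → Matrix (Fin (2 * n)) (Fin (2 * n)) ℝ)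
    (hPcol : ∀ r s, r ≤ s → ∀ j, ∑ i, P s r i j = 1)
    (hPdev : ∀ r s, r ≤ s → ∀ i j, |P s r i j - J i j| ≤ Γ * σ ^ (s - r + 1))
    (α : ℕ → ℝ) (hα : ∀ r, 0 ≤ α r)
    (g : ℕ → Fin (2 * n) → ℝ)
    (hgD : ∀ r j, |g r j| ≤ D)
    (hg0 : ∀ r (j : Fin (2 * n)), n ≤ (j : ℕ) → g r j = 0)
    (z0 : Fin (2 * n) → ℝ)
    (z : ℕ → Fin (2 * n) → ℝ)
    (hz : ∀ k, 1 ≤ k → z k = (P (k - 1) 0).mulVec z0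
        - ∑ r ∈ Icc 1 (k - 1), α (r - 1) • (P (k - 1) r).mulVec (g (r - 1))
        - α (k - 1) • g (k - 1))
    (zbar : ℕ → ℝ) (hzbar : ∀ k, zbar k = (1 / n : ℝ) * ∑ j, z k j) :
    ∀ k, 1 ≤ k → ∀ i : Fin (2 * n), (i : ℕ) < n →
      |z k i - zbar k| ≤ Γ * σ ^ k * ∑ j, |z0 j|
        + n * Γ * D * ∑ r ∈ Icc 1 (k - 1), σ ^ (k - r) * α (r - 1)
        + 2 * D * α (k - 1) :=
  stmt_14_general n hn σ Γ D hσ0 hΓ J hJ P hPcol hPdev α hα g hgD hg0 z0 z hz zbar hzbar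
end

section
/- Let $n \geq 1$, $N = 2n$, $0 < \sigma < 1$, $\Gamma > 0$, $D \geq 0$. Let $J \in \mathbb{R}^{N \times N}$ be the matrix with $J_{ij} = 1/n$ for $1 \leq i \leq n$ and $J_{ij} = 0$ for $n+1 \leq i \leq N$ (all $j$). For integers $0 \leq r \leq s$ let $P(s{:}r) \in \mathbb{R}^{N \times N}$ be matrices such that every column of $P(s{:}r)$ sums to $1$ and $|[P(s{:}r)]_{ij} - J_{ij}| \leq \Gamma \sigma^{s-r+1}$ for all $i,j$. Let $\alpha_r \geq 0$, let $g^r \in \mathbb{R}^N$ satisfy $|g^r_j| \leq D$ for all $j$ and $g^r_j = 0$ for $j > n$, let $z^0 \in \mathbb{R}^N$, and for $k \geq 1$ define $z^k = P(k{-}1{:}0)\, z^0 - \sum_{r=1}^{k-1} \alpha_{r-1} P(k{-}1{:}r)\, g^{r-1} - \alpha_{k-1} g^{k-1}$. Then for every $k \geq 1$ and every $n+1 \leq i \leq N$: $|z^k_i| \leq \Gamma \sigma^k \sum_{j=1}^{N} |z^0_j| + n \Gamma D \sum_{r=1}^{k-1} \sigma^{k-r} \alpha_{r-1}$. -/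
/-!
Row `i > n` of `J` is zero, so row `i` of every `P(s:r)` is entrywise at most `Γ σ^(s-r+1)`.
Since `g^r` vanishes at `i` and has `ℓ¹`-norm at most `n D`, the triangle inequality applied to
the closed form of `z^k` gives the bound.
-/

open Finset Matrix

lemma abs_mulVec_apply_le {m n : Type*} [Fintype n] (A : Matrix m n ℝ) (x : n → ℝ) (i : m)
    {c : ℝ} (hA : ∀ j, |A i j| ≤ c) : |(A *ᵥ x) i| ≤ c * ∑ j, |x j| :=
  calc |(A *ᵥ x) i| = |∑ j, A i j * x j| := rfl
    _ ≤ ∑ j, |A i j| * |x j| := by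
      simpa only [abs_mul] using abs_sum_le_sum_abs (fun j => A i j * x j) univ
    _ ≤ ∑ j, c * |x j| := by gcongr with j; exact hA j
    _ = c * ∑ j, |x j| := (mul_sum _ _ _).symm

lemma sum_abs_le_of_apply_eq_zero {m n : ℕ} (hnm : n ≤ m) (f : Fin m → ℝ) {D : ℝ}
    (hfD : ∀ j, |f j| ≤ D) (hf0 : ∀ j : Fin m, n ≤ (j : ℕ) → f j = 0) :
    ∑ j, |f j| ≤ n * D := by
  have hsupp : ∑ j ∈ univ.filter fun j : Fin m => (j : ℕ) < n, |f j| = ∑ j, |f j| :=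
    sum_filter_of_ne fun j _ hj => not_le.mp fun hjn => hj (by rw [hf0 j hjn, abs_zero])
  calc ∑ j, |f j| = ∑ j ∈ univ.filter fun j : Fin m => (j : ℕ) < n, |f j| := hsupp.symm
    _ ≤ #{j : Fin m | (j : ℕ) < n} • D := sum_le_card_nsmul _ _ _ fun j _ => hfD j
    _ = n * D := by rw [Fin.card_filter_val_lt, min_eq_right hnm, nsmul_eq_mul]

theorem stmt_15_general (n : ℕ) (σ Γ D : ℝ)
    (J : Matrix (Fin (2 * n)) (Fin (2 * n)) ℝ)
    (hJ : ∀ i j, J i j = if (i : ℕ) < n then (1 / n : ℝ) else 0)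
    (P : ℕ → ℕ → Matrix (Fin (2 * n)) (Fin (2 * n)) ℝ)
    (hPdev : ∀ r s, r ≤ s → ∀ i j, |P s r i j - J i j| ≤ Γ * σ ^ (s - r + 1))
    (α : ℕ → ℝ) (hα : ∀ r, 0 ≤ α r)
    (g : ℕ → Fin (2 * n) → ℝ)
    (hgD : ∀ r j, |g r j| ≤ D)
    (hg0 : ∀ r (j : Fin (2 * n)), n ≤ (j : ℕ) → g r j = 0)
    (z0 : Fin (2 * n) → ℝ)
    (z : ℕ → Fin (2 * n) → ℝ)
    (hz : ∀ k, 1 ≤ k → z k = (P (k - 1) 0).mulVec z0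
        - ∑ r ∈ Icc 1 (k - 1), α (r - 1) • (P (k - 1) r).mulVec (g (r - 1))
        - α (k - 1) • g (k - 1)) :
    ∀ k, 1 ≤ k → ∀ i : Fin (2 * n), n ≤ (i : ℕ) →
      |z k i| ≤ Γ * σ ^ k * ∑ j, |z0 j|
        + n * Γ * D * ∑ r ∈ Icc 1 (k - 1), σ ^ (k - r) * α (r - 1) := by
  intro k hk i hi
  have hProw : ∀ r ≤ k - 1, ∀ j, |P (k - 1) r i j| ≤ Γ * σ ^ (k - r) := fun r hr j => by
    simpa [hJ, hi.not_gt, show k - 1 - r + 1 = k - r by omega] using hPdev r (k - 1) hr i j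
  have hgsum : ∀ r, ∑ j, |g r j| ≤ n * D := fun r =>
    sum_abs_le_of_apply_eq_zero (by omega) (g r) (hgD r) (hg0 r)
  have hinit : |(P (k - 1) 0 *ᵥ z0) i| ≤ Γ * σ ^ k * ∑ j, |z0 j| := by
    simpa using abs_mulVec_apply_le _ z0 i (hProw 0 (Nat.zero_le _))
  have hterm : ∀ r ∈ Icc 1 (k - 1),
      |α (r - 1) * (P (k - 1) r *ᵥ g (r - 1)) i|
        ≤ n * Γ * D * (σ ^ (k - r) * α (r - 1)) := by
    intro r hr
    have hr' := (mem_Icc.mp hr).2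
    have hc : 0 ≤ Γ * σ ^ (k - r) := (abs_nonneg _).trans (hProw r hr' i)
    rw [abs_mul, abs_of_nonneg (hα _)]
    calc α (r - 1) * |(P (k - 1) r *ᵥ g (r - 1)) i|
        ≤ α (r - 1) * (Γ * σ ^ (k - r) * (n * D)) :=
          mul_le_mul_of_nonneg_left ((abs_mulVec_apply_le _ _ i (hProw r hr')).trans
            (mul_le_mul_of_nonneg_left (hgsum _) hc)) (hα _)
      _ = n * Γ * D * (σ ^ (k - r) * α (r - 1)) := by ring
  rw [hz k hk]
  simp only [Pi.sub_apply, Pi.smul_apply, smul_eq_mul, Finset.sum_apply, hg0 _ i hi, mul_zero,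
    sub_zero]
  calc _ ≤ |(P (k - 1) 0 *ᵥ z0) i|
        + |∑ r ∈ Icc 1 (k - 1), α (r - 1) * (P (k - 1) r *ᵥ g (r - 1)) i| := abs_sub _ _
    _ ≤ _ := by
      rw [mul_sum (Icc 1 (k - 1))]
      exact add_le_add hinit ((abs_sum_le_sum_abs _ _).trans (sum_le_sum hterm))

/-- Lemma 3(b) of the paper in abstract form: the vanishing-surplus bound
`|z^k_i| ≤ Γ σ^k ∑_j |z^0_j| + n Γ D ∑_{r=1}^{k-1} σ^{k-r} α_{r-1}` for the
surplus coordinates `i > n`, where `z^k` is the closed-form solution of the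
sparsified decentralized update driven by products `P(s:r)` of perturbed mixing
matrices that deviate entrywise from the consensus projector `J` geometrically
and have columns summing to one. -/
theorem stmt_15 (n : ℕ) (hn : 1 ≤ n) (σ Γ D : ℝ)
    (hσ0 : 0 < σ) (hσ1 : σ < 1) (hΓ : 0 < Γ) (hD : 0 ≤ D)
    (J : Matrix (Fin (2 * n)) (Fin (2 * n)) ℝ)
    (hJ : ∀ i j, J i j = if (i : ℕ) < n then (1 / n : ℝ) else 0)
    (P : ℕ → ℕ → Matrix (Fin (2 * n)) (Fin (2 * n)) ℝ)
    (hPcol : ∀ r s, r ≤ s → ∀ j, ∑ i, P s r i j = 1)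
    (hPdev : ∀ r s, r ≤ s → ∀ i j, |P s r i j - J i j| ≤ Γ * σ ^ (s - r + 1))
    (α : ℕ → ℝ) (hα : ∀ r, 0 ≤ α r)
    (g : ℕ → Fin (2 * n) → ℝ)
    (hgD : ∀ r j, |g r j| ≤ D)
    (hg0 : ∀ r (j : Fin (2 * n)), n ≤ (j : ℕ) → g r j = 0)
    (z0 : Fin (2 * n) → ℝ)
    (z : ℕ → Fin (2 * n) → ℝ)
    (hz : ∀ k, 1 ≤ k → z k = (P (k - 1) 0).mulVec z0
        - ∑ r ∈ Icc 1 (k - 1), α (r - 1) • (P (k - 1) r).mulVec (g (r - 1))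
        - α (k - 1) • g (k - 1)) :
    ∀ k, 1 ≤ k → ∀ i : Fin (2 * n), n ≤ (i : ℕ) →
      |z k i| ≤ Γ * σ ^ k * ∑ j, |z0 j|
        + n * Γ * D * ∑ r ∈ Icc 1 (k - 1), σ ^ (k - r) * α (r - 1) :=
  stmt_15_general n σ Γ D J hJ P hPdev α hα g hgD hg0 z0 z hz
end
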